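/- Let γ be a smooth solution of curve shortening flow in ℝⁿ on [0, ω) with K₀ := sup κ²(·,0) < ∞. Then for all t ∈ (0, 1/(8K₀)] the curvature satisfies κ²(·,t) ≤ K₀/(1 - 4K₀t) ≤ 2K₀. -/

import Mathlib

open Real

noncomputable section

/-- Arclength derivative `∂/∂s = (1/v) ∂/∂p`. -/
def dS {F : Type*} [NormedAddCommGroup F] [NormedSpace ℝ F]
    (v : ℝ → ℝ → ℝ) (f : ℝ → ℝ → F) (p t : ℝ) : F :=
  (v p t)⁻¹ • deriv (fun q => f q t) p

/-- Time derivative at fixed parameter. -/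
def dT {F : Type*} [NormedAddCommGroup F] [NormedSpace ℝ F]
    (f : ℝ → ℝ → F) (p t : ℝ) : F :=
  deriv (fun τ => f p τ) t

section CSFAux

open Real Set Filter
open scoped ContDiff RealInnerProductSpace Topology

variable {E : Type*} [NormedAddCommGroup E] [InnerProductSpace ℝ E]


variable {E : Type*} [NormedAddCommGroup E] [InnerProductSpace ℝ E]



/-- partial derivative in the first variable -/
def pd1 (f : ℝ × ℝ → E) (q : ℝ × ℝ) : E := fderiv ℝ f q (1, 0)
/-- partial derivative in the second variable -/
def pd2 (f : ℝ × ℝ → E) (q : ℝ × ℝ) : E := fderiv ℝ f q (0, 1)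

theorem hasDerivAt_slice1 {f : ℝ × ℝ → E} {q : ℝ × ℝ} (hf : DifferentiableAt ℝ f q) :
    HasDerivAt (fun p => f (p, q.2)) (pd1 f q) q.1 := by
  have h1 : HasDerivAt (fun p : ℝ => (p, q.2)) ((1 : ℝ), (0 : ℝ)) q.1 :=
    (hasDerivAt_id q.1).prodMk (hasDerivAt_const q.1 q.2)
  exact hf.hasFDerivAt.comp_hasDerivAt q.1 h1

theorem hasDerivAt_slice2 {f : ℝ × ℝ → E} {q : ℝ × ℝ} (hf : DifferentiableAt ℝ f q) :
    HasDerivAt (fun t => f (q.1, t)) (pd2 f q) q.2 := by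
  have h1 : HasDerivAt (fun t : ℝ => (q.1, t)) ((0 : ℝ), (1 : ℝ)) q.2 :=
    (hasDerivAt_const q.2 q.1).prodMk (hasDerivAt_id q.2)
  exact hf.hasFDerivAt.comp_hasDerivAt q.2 h1

theorem contDiffAt_pd1 {f : ℝ × ℝ → E} {q : ℝ × ℝ} {m n : WithTop ℕ∞}
    (hf : ContDiffAt ℝ n f q) (h : m + 1 ≤ n) : ContDiffAt ℝ m (pd1 f) q :=
  (hf.fderiv_right h).clm_apply contDiffAt_const

theorem contDiffAt_pd2 {f : ℝ × ℝ → E} {q : ℝ × ℝ} {m n : WithTop ℕ∞}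
    (hf : ContDiffAt ℝ n f q) (h : m + 1 ≤ n) : ContDiffAt ℝ m (pd2 f) q :=
  (hf.fderiv_right h).clm_apply contDiffAt_const

example : (∞ : WithTop ℕ∞) + 1 ≤ ∞ := by norm_num

/-- Clairaut for our partials. -/
theorem pd2_pd1_comm {f : ℝ × ℝ → E} {q : ℝ × ℝ} (hf : ContDiffAt ℝ 2 f q) :
    pd2 (pd1 f) q = pd1 (pd2 f) q := by
  have hsymm := hf.isSymmSndFDerivAt (by simp)
  have hdf : DifferentiableAt ℝ (fderiv ℝ f) q :=
    (hf.fderiv_right (m := 1) (by norm_num)).differentiableAt one_ne_zero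
  have h1 : fderiv ℝ (pd1 f) q = ((ContinuousLinearMap.apply ℝ E ((1:ℝ),(0:ℝ))).comp
      (fderiv ℝ (fderiv ℝ f) q)) := by
    have : pd1 f = fun q => (ContinuousLinearMap.apply ℝ E ((1:ℝ),(0:ℝ))) (fderiv ℝ f q) := rfl
    rw [this, fderiv_comp' q (ContinuousLinearMap.apply ℝ E ((1:ℝ),(0:ℝ))).differentiableAt hdf]
    simp
  have h2 : fderiv ℝ (pd2 f) q = ((ContinuousLinearMap.apply ℝ E ((0:ℝ),(1:ℝ))).comp
      (fderiv ℝ (fderiv ℝ f) q)) := by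
    have : pd2 f = fun q => (ContinuousLinearMap.apply ℝ E ((0:ℝ),(1:ℝ))) (fderiv ℝ f q) := rfl
    rw [this, fderiv_comp' q (ContinuousLinearMap.apply ℝ E ((0:ℝ),(1:ℝ))).differentiableAt hdf]
    simp
  show fderiv ℝ (pd1 f) q (0,1) = fderiv ℝ (pd2 f) q (1,0)
  rw [h1, h2]
  simpa using hsymm (0,1) (1,0)


def VV (Γ : ℝ × ℝ → E) (q : ℝ × ℝ) : ℝ := ‖pd1 Γ q‖
def TT (Γ : ℝ × ℝ → E) (q : ℝ × ℝ) : E := (VV Γ q)⁻¹ • pd1 Γ q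
def HH (Γ : ℝ × ℝ → E) (q : ℝ × ℝ) : E := (VV Γ q)⁻¹ • pd1 (TT Γ) q
def FF (Γ : ℝ × ℝ → E) (q : ℝ × ℝ) : ℝ := ‖HH Γ q‖ ^ 2

variable {Γ : ℝ × ℝ → E} {q : ℝ × ℝ}


section smooth
variable (hΓ : ContDiff ℝ ∞ Γ) (hq : pd1 Γ q ≠ 0)
include hΓ hq

theorem VV_contDiffAt : ContDiffAt ℝ ∞ (VV Γ) q :=
  (contDiffAt_pd1 hΓ.contDiffAt (by norm_num)).norm ℝ hq

omit hΓ in theorem VV_pos : 0 < VV Γ q := norm_pos_iff.2 hq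

theorem TT_contDiffAt : ContDiffAt ℝ ∞ (TT Γ) q :=
  ((VV_contDiffAt hΓ hq).inv (VV_pos hq).ne').smul (contDiffAt_pd1 hΓ.contDiffAt (by norm_num))

theorem HH_contDiffAt : ContDiffAt ℝ ∞ (HH Γ) q :=
  ((VV_contDiffAt hΓ hq).inv (VV_pos hq).ne').smul
    (contDiffAt_pd1 (TT_contDiffAt hΓ hq) (by norm_num))

theorem FF_contDiffAt : ContDiffAt ℝ ∞ (FF Γ) q := by
  have := (HH_contDiffAt hΓ hq).norm_sq (𝕜 := ℝ)
  exact this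

omit hΓ in theorem TT_norm_one : ‖TT Γ q‖ = 1 := by
  rw [TT, norm_smul, norm_inv, VV, norm_norm]
  exact inv_mul_cancel₀ (norm_pos_iff.2 hq).ne'
end smooth

variable {q : ℝ × ℝ} {w : ℝ × ℝ} {c d : ℝ × ℝ → ℝ} {f g : ℝ × ℝ → E}

theorem pd_smul (hc : DifferentiableAt ℝ c q) (hf : DifferentiableAt ℝ f q) :
    fderiv ℝ (fun r => c r • f r) q w = (fderiv ℝ c q w) • f q + c q • (fderiv ℝ f q w) := by
  rw [fderiv_fun_smul hc hf]; simp [add_comm]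

theorem pd_inner (hf : DifferentiableAt ℝ f q) (hg : DifferentiableAt ℝ g q) :
    fderiv ℝ (fun r => ⟪f r, g r⟫) q w = ⟪fderiv ℝ f q w, g q⟫ + ⟪f q, fderiv ℝ g q w⟫ := by
  rw [(hf.hasFDerivAt.inner ℝ hg.hasFDerivAt).fderiv]
  simp [fderivInnerCLM_apply, add_comm]

theorem pd_inv (hc : DifferentiableAt ℝ c q) (h0 : c q ≠ 0) :
    fderiv ℝ (fun r => (c r)⁻¹) q w = -(fderiv ℝ c q w) / (c q) ^ 2 := by
  have h := (hasDerivAt_inv h0).comp_hasFDerivAt q hc.hasFDerivAt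
  rw [show (fun r => (c r)⁻¹) = (fun y => y⁻¹) ∘ c from rfl, h.fderiv]
  simp [neg_div]
  ring

theorem pd_mul (hc : DifferentiableAt ℝ c q) (hd : DifferentiableAt ℝ d q) :
    fderiv ℝ (fun r => c r * d r) q w = (fderiv ℝ c q w) * d q + c q * (fderiv ℝ d q w) := by
  rw [fderiv_fun_mul hc hd]; simp; ring



/-- arclength derivative of the curvature vector -/
def DsH (Γ : ℝ × ℝ → E) (q : ℝ × ℝ) : E := (VV Γ q)⁻¹ • pd1 (HH Γ) q

section identities
variable {Γ : ℝ × ℝ → E} {q : ℝ × ℝ}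
variable (hΓ : ContDiff ℝ ∞ Γ)
include hΓ

theorem diffVV (hq : pd1 Γ q ≠ 0) : DifferentiableAt ℝ (VV Γ) q :=
  (VV_contDiffAt hΓ hq).differentiableAt (by decide)
theorem diffVVinv (hq : pd1 Γ q ≠ 0) : DifferentiableAt ℝ (fun r => (VV Γ r)⁻¹) q :=
  (((VV_contDiffAt hΓ hq).inv (VV_pos hq).ne')).differentiableAt (by decide)
theorem diffTT (hq : pd1 Γ q ≠ 0) : DifferentiableAt ℝ (TT Γ) q :=
  (TT_contDiffAt hΓ hq).differentiableAt (by decide)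
theorem diffHH (hq : pd1 Γ q ≠ 0) : DifferentiableAt ℝ (HH Γ) q :=
  (HH_contDiffAt hΓ hq).differentiableAt (by decide)
theorem diffFF (hq : pd1 Γ q ≠ 0) : DifferentiableAt ℝ (FF Γ) q :=
  (FF_contDiffAt hΓ hq).differentiableAt (by decide)
theorem diffpd1TT (hq : pd1 Γ q ≠ 0) : DifferentiableAt ℝ (pd1 (TT Γ)) q :=
  (contDiffAt_pd1 (m := ∞) (TT_contDiffAt hΓ hq) (by decide)).differentiableAt (by decide)
theorem diffpd1HH (hq : pd1 Γ q ≠ 0) : DifferentiableAt ℝ (pd1 (HH Γ)) q :=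
  (contDiffAt_pd1 (m := ∞) (HH_contDiffAt hΓ hq) (by decide)).differentiableAt (by decide)
theorem DsH_contDiffAt (hq : pd1 Γ q ≠ 0) : ContDiffAt ℝ ∞ (DsH Γ) q :=
  ((VV_contDiffAt hΓ hq).inv (VV_pos hq).ne').smul
    (contDiffAt_pd1 (m := ∞) (HH_contDiffAt hΓ hq) (by decide))
theorem diffDsH (hq : pd1 Γ q ≠ 0) : DifferentiableAt ℝ (DsH Γ) q :=
  (DsH_contDiffAt hΓ hq).differentiableAt (by decide)
theorem diffpd1Γ : DifferentiableAt ℝ (pd1 Γ) q :=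
  (contDiffAt_pd1 (m := ∞) hΓ.contDiffAt (by decide)).differentiableAt (by decide)
theorem diffΓ : DifferentiableAt ℝ Γ q := hΓ.differentiable (by decide) q

theorem eventually_W (hq : pd1 Γ q ≠ 0) : ∀ᶠ r in 𝓝 q, pd1 Γ r ≠ 0 :=
  (contDiffAt_pd1 (m := 0) (n := ∞) hΓ.contDiffAt (by decide)).continuousAt.eventually_ne hq

omit hΓ in
theorem pd1_Γ_eq (hq : pd1 Γ q ≠ 0) : pd1 Γ q = VV Γ q • TT Γ q :=
  (smul_inv_smul₀ (VV_pos hq).ne' _).symm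

omit hΓ in
theorem pd1_TT_eq (hq : pd1 Γ q ≠ 0) : pd1 (TT Γ) q = VV Γ q • HH Γ q :=
  (smul_inv_smul₀ (VV_pos hq).ne' _).symm

omit hΓ in
theorem pd1_HH_eq (hq : pd1 Γ q ≠ 0) : pd1 (HH Γ) q = VV Γ q • DsH Γ q :=
  (smul_inv_smul₀ (VV_pos hq).ne' _).symm

theorem inner_TT_pd1TT (hq : pd1 Γ q ≠ 0) : ⟪TT Γ q, pd1 (TT Γ) q⟫ = 0 := by
  have heq : (fun r => ⟪TT Γ r, TT Γ r⟫) =ᶠ[𝓝 q] fun _ => (1 : ℝ) :=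
    (eventually_W hΓ hq).mono fun r hr => by
      show ⟪TT Γ r, TT Γ r⟫ = 1
      rw [real_inner_self_eq_norm_sq, TT_norm_one hr]; norm_num
  have h0 : fderiv ℝ (fun r => ⟪TT Γ r, TT Γ r⟫) q (1, 0) = 0 := by
    rw [heq.fderiv_eq]; simp
  rw [pd_inner (diffTT hΓ hq) (diffTT hΓ hq)] at h0
  have h0' : ⟪pd1 (TT Γ) q, TT Γ q⟫ + ⟪TT Γ q, pd1 (TT Γ) q⟫ = 0 := h0
  have := real_inner_comm (TT Γ q) (pd1 (TT Γ) q)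
  linarith [h0', this]

theorem inner_TT_HH (hq : pd1 Γ q ≠ 0) : ⟪TT Γ q, HH Γ q⟫ = 0 := by
  rw [HH, real_inner_smul_right, inner_TT_pd1TT hΓ hq, mul_zero]

theorem inner_TT_pd1HH (hq : pd1 Γ q ≠ 0) :
    ⟪TT Γ q, pd1 (HH Γ) q⟫ = -(VV Γ q * FF Γ q) := by
  have heq : (fun r => ⟪TT Γ r, HH Γ r⟫) =ᶠ[𝓝 q] fun _ => (0 : ℝ) :=
    (eventually_W hΓ hq).mono fun r hr => inner_TT_HH hΓ hr
  have h0 : fderiv ℝ (fun r => ⟪TT Γ r, HH Γ r⟫) q (1, 0) = 0 := by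
    rw [heq.fderiv_eq]; simp
  rw [pd_inner (diffTT hΓ hq) (diffHH hΓ hq)] at h0
  have h0' : ⟪pd1 (TT Γ) q, HH Γ q⟫ + ⟪TT Γ q, pd1 (HH Γ) q⟫ = 0 := h0
  have h1 : ⟪pd1 (TT Γ) q, HH Γ q⟫ = VV Γ q * FF Γ q := by
    rw [pd1_TT_eq hq, real_inner_smul_left, real_inner_self_eq_norm_sq]; rfl
  linarith [h0', h1]

theorem pd1_FF_eq (hq : pd1 Γ q ≠ 0) : pd1 (FF Γ) q = 2 * ⟪HH Γ q, pd1 (HH Γ) q⟫ := by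
  have heq : FF Γ = fun r => ⟪HH Γ r, HH Γ r⟫ := by
    funext r; rw [FF, real_inner_self_eq_norm_sq]
  show fderiv ℝ (FF Γ) q (1, 0) = _
  rw [heq, pd_inner (diffHH hΓ hq) (diffHH hΓ hq)]
  have h0' : ⟪pd1 (HH Γ) q, HH Γ q⟫ = ⟪HH Γ q, pd1 (HH Γ) q⟫ :=
    real_inner_comm _ _
  show ⟪pd1 (HH Γ) q, HH Γ q⟫ + ⟪HH Γ q, pd1 (HH Γ) q⟫ = _
  linarith

end identities

section flow
variable {Γ : ℝ × ℝ → E} {q : ℝ × ℝ}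
variable (hΓ : ContDiff ℝ ∞ Γ)
variable (hWO : ∀ᶠ r in 𝓝 q, pd1 Γ r ≠ 0 ∧ pd2 Γ r = HH Γ r)
include hΓ hWO

theorem pd1_pd2Γ_eq : pd1 (pd2 Γ) q = pd1 (HH Γ) q := by
  have heq : pd2 Γ =ᶠ[𝓝 q] HH Γ := hWO.mono fun r hr => hr.2
  show fderiv ℝ (pd2 Γ) q (1, 0) = fderiv ℝ (HH Γ) q (1, 0)
  rw [heq.fderiv_eq]

theorem pd2_pd1Γ_eq : pd2 (pd1 Γ) q = pd1 (HH Γ) q := by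
  rw [pd2_pd1_comm (hΓ.contDiffAt.of_le (by decide))]
  exact pd1_pd2Γ_eq hΓ hWO

theorem pd2_VV_eq : pd2 (VV Γ) q = -(FF Γ q * VV Γ q) := by
  have hq : pd1 Γ q ≠ 0 := hWO.self_of_nhds.1
  have hv := (VV_pos (Γ := Γ) (q := q) hq)
  -- derivative of ⟪g1, g1⟫ in time
  have h1 : fderiv ℝ (fun r => ⟪pd1 Γ r, pd1 Γ r⟫) q (0, 1)
      = ⟪pd2 (pd1 Γ) q, pd1 Γ q⟫ + ⟪pd1 Γ q, pd2 (pd1 Γ) q⟫ :=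
    pd_inner (diffpd1Γ hΓ) (diffpd1Γ hΓ)
  have h2 : ⟪pd1 Γ q, pd2 (pd1 Γ) q⟫ = -(VV Γ q ^ 2 * FF Γ q) := by
    rw [pd2_pd1Γ_eq hΓ hWO, pd1_Γ_eq hq, real_inner_smul_left,
      inner_TT_pd1HH hΓ hq]
    ring
  have h2' : ⟪pd2 (pd1 Γ) q, pd1 Γ q⟫ = -(VV Γ q ^ 2 * FF Γ q) := by
    rw [real_inner_comm]; exact h2
  -- the same function is VV^2
  have heq : (fun r => ⟪pd1 Γ r, pd1 Γ r⟫) = fun r => VV Γ r * VV Γ r := by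
    funext r
    rw [real_inner_self_eq_norm_sq]
    show ‖pd1 Γ r‖ ^ 2 = VV Γ r * VV Γ r
    rw [VV]; ring
  have h3 : fderiv ℝ (fun r => VV Γ r * VV Γ r) q (0, 1)
      = pd2 (VV Γ) q * VV Γ q + VV Γ q * pd2 (VV Γ) q :=
    pd_mul (diffVV hΓ hq) (diffVV hΓ hq)
  rw [heq, h3] at h1
  have h4 : pd2 (VV Γ) q * VV Γ q + VV Γ q * pd2 (VV Γ) q
      = -(VV Γ q ^ 2 * FF Γ q) + -(VV Γ q ^ 2 * FF Γ q) := by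
    rw [h1, h2, h2']
  have hvne : VV Γ q ≠ 0 := hv.ne'
  field_simp at h4 ⊢
  nlinarith [h4]

theorem pd2_VVinv_eq : pd2 (fun r => (VV Γ r)⁻¹) q = FF Γ q * (VV Γ q)⁻¹ := by
  have hq : pd1 Γ q ≠ 0 := hWO.self_of_nhds.1
  have hvne : VV Γ q ≠ 0 := (VV_pos hq).ne'
  show fderiv ℝ (fun r => (VV Γ r)⁻¹) q (0, 1) = _
  rw [pd_inv (diffVV hΓ hq) hvne]
  show -(pd2 (VV Γ) q) / VV Γ q ^ 2 = _
  rw [pd2_VV_eq hΓ hWO]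
  field_simp

theorem pd2_TT_eq : pd2 (TT Γ) q = FF Γ q • TT Γ q + DsH Γ q := by
  have hq : pd1 Γ q ≠ 0 := hWO.self_of_nhds.1
  have h1 : pd2 (TT Γ) q
      = pd2 (fun r => (VV Γ r)⁻¹) q • pd1 Γ q + (VV Γ q)⁻¹ • pd2 (pd1 Γ) q := by
    show fderiv ℝ (fun r => (VV Γ r)⁻¹ • pd1 Γ r) q (0, 1) = _
    exact pd_smul (diffVVinv hΓ hq) (diffpd1Γ hΓ)
  rw [h1, pd2_VVinv_eq hΓ hWO, pd2_pd1Γ_eq hΓ hWO, pd1_Γ_eq hq, pd1_HH_eq hq]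
  have hvne : VV Γ q ≠ 0 := (VV_pos hq).ne'
  match_scalars <;> field_simp

end flow

section flow2
variable {Γ : ℝ × ℝ → E} {q : ℝ × ℝ}
variable (hΓ : ContDiff ℝ ∞ Γ)
variable (hWO : ∀ᶠ r in 𝓝 q, pd1 Γ r ≠ 0 ∧ pd2 Γ r = HH Γ r)
include hΓ hWO

theorem pd2_HH_eq : pd2 (HH Γ) q = (2 * FF Γ q) • HH Γ q
    + ((VV Γ q)⁻¹ * pd1 (FF Γ) q) • TT Γ q + (VV Γ q)⁻¹ • pd1 (DsH Γ) q := by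
  have hq : pd1 Γ q ≠ 0 := hWO.self_of_nhds.1
  have hvne : VV Γ q ≠ 0 := (VV_pos hq).ne'
  have h1 : pd2 (HH Γ) q
      = pd2 (fun r => (VV Γ r)⁻¹) q • pd1 (TT Γ) q + (VV Γ q)⁻¹ • pd2 (pd1 (TT Γ)) q := by
    show fderiv ℝ (fun r => (VV Γ r)⁻¹ • pd1 (TT Γ) r) q (0, 1) = _
    exact pd_smul (diffVVinv hΓ hq) (diffpd1TT hΓ hq)
  have heqTT : pd2 (TT Γ) =ᶠ[𝓝 q] fun r => FF Γ r • TT Γ r + DsH Γ r :=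
    hWO.eventually_nhds.mono fun r hr => pd2_TT_eq hΓ hr
  have h2 : pd2 (pd1 (TT Γ)) q = pd1 (fun r => FF Γ r • TT Γ r + DsH Γ r) q := by
    rw [pd2_pd1_comm ((TT_contDiffAt hΓ hq).of_le (by decide))]
    show fderiv ℝ (pd2 (TT Γ)) q (1, 0) = fderiv ℝ _ q (1, 0)
    rw [heqTT.fderiv_eq]
  have h3 : pd1 (fun r => FF Γ r • TT Γ r + DsH Γ r) q
      = pd1 (FF Γ) q • TT Γ q + FF Γ q • pd1 (TT Γ) q + pd1 (DsH Γ) q := by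
    show fderiv ℝ (fun r => FF Γ r • TT Γ r + DsH Γ r) q (1, 0) = _
    rw [fderiv_fun_add (f := fun r => FF Γ r • TT Γ r) ((diffFF hΓ hq).smul (diffTT hΓ hq)) (diffDsH hΓ hq)]
    show fderiv ℝ (fun r => FF Γ r • TT Γ r) q (1, 0) + fderiv ℝ (DsH Γ) q (1, 0) = _
    rw [pd_smul (diffFF hΓ hq) (diffTT hΓ hq)]
    rfl
  rw [h1, h2, h3, pd2_VVinv_eq hΓ hWO, pd1_TT_eq hq]
  rw [smul_add, smul_add]
  match_scalars <;> field_simp <;> ring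

theorem pd2_FF_eq : pd2 (FF Γ) q = 4 * FF Γ q ^ 2 - 2 * ‖DsH Γ q‖ ^ 2
    + (VV Γ q)⁻¹ * pd1 (fun r => (VV Γ r)⁻¹ * pd1 (FF Γ) r) q := by
  have hq : pd1 Γ q ≠ 0 := hWO.self_of_nhds.1
  have hvne : VV Γ q ≠ 0 := (VV_pos hq).ne'
  have hFFfun : FF Γ = fun r => ⟪HH Γ r, HH Γ r⟫ := by
    funext r; rw [FF, real_inner_self_eq_norm_sq]
  -- time derivative of F
  have h1 : pd2 (FF Γ) q = ⟪pd2 (HH Γ) q, HH Γ q⟫ + ⟪HH Γ q, pd2 (HH Γ) q⟫ := by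
    show fderiv ℝ (FF Γ) q (0, 1) = _
    rw [hFFfun, pd_inner (diffHH hΓ hq) (diffHH hΓ hq)]
    rfl
  have h2 : ⟪HH Γ q, pd2 (HH Γ) q⟫
      = 2 * FF Γ q ^ 2 + (VV Γ q)⁻¹ * ⟪HH Γ q, pd1 (DsH Γ) q⟫ := by
    rw [pd2_HH_eq hΓ hWO, inner_add_right, inner_add_right, real_inner_smul_right,
      real_inner_smul_right, real_inner_smul_right]
    have hTH : ⟪HH Γ q, TT Γ q⟫ = 0 := by
      rw [real_inner_comm]; exact inner_TT_HH hΓ hq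
    rw [hTH, real_inner_self_eq_norm_sq]
    show 2 * FF Γ q * FF Γ q + _ * 0 + _ = _
    ring
  -- spatial identity: v⁻¹ * ∂ₚF = 2⟪H, DsH⟫ near q
  have hGev : (fun r => (VV Γ r)⁻¹ * pd1 (FF Γ) r) =ᶠ[𝓝 q]
      fun r => 2 * ⟪HH Γ r, DsH Γ r⟫ :=
    (hWO.mono fun r hr => hr.1).mono (fun r hr => by
      have hvr : VV Γ r ≠ 0 := (VV_pos hr).ne'
      show (VV Γ r)⁻¹ * pd1 (FF Γ) r = 2 * ⟪HH Γ r, DsH Γ r⟫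
      rw [pd1_FF_eq hΓ hr, pd1_HH_eq hr, real_inner_smul_right]
      field_simp)
  have h3 : pd1 (fun r => (VV Γ r)⁻¹ * pd1 (FF Γ) r) q
      = 2 * (VV Γ q * ‖DsH Γ q‖ ^ 2 + ⟪HH Γ q, pd1 (DsH Γ) q⟫) := by
    show fderiv ℝ _ q (1, 0) = _
    rw [hGev.fderiv_eq]
    have : fderiv ℝ (fun r => 2 * ⟪HH Γ r, DsH Γ r⟫) q
        = 2 • fderiv ℝ (fun r => ⟪HH Γ r, DsH Γ r⟫) q := by
      rw [← fderiv_fun_const_smul ((diffHH hΓ hq).inner ℝ (diffDsH hΓ hq))]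
      simp [smul_eq_mul]
    rw [this]
    show 2 • (fderiv ℝ (fun r => ⟪HH Γ r, DsH Γ r⟫) q (1, 0)) = _
    rw [pd_inner (diffHH hΓ hq) (diffDsH hΓ hq)]
    have h4 : ⟪pd1 (HH Γ) q, DsH Γ q⟫ = VV Γ q * ‖DsH Γ q‖ ^ 2 := by
      rw [pd1_HH_eq hq, real_inner_smul_left, real_inner_self_eq_norm_sq]
    show 2 • (⟪pd1 (HH Γ) q, DsH Γ q⟫ + ⟪HH Γ q, pd1 (DsH Γ) q⟫) = _
    rw [h4]
    simp [smul_eq_mul]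
    ring
  have h2' : ⟪pd2 (HH Γ) q, HH Γ q⟫
      = 2 * FF Γ q ^ 2 + (VV Γ q)⁻¹ * ⟪HH Γ q, pd1 (DsH Γ) q⟫ := by
    rw [real_inner_comm]; exact h2
  rw [h1, h2, h2', h3]
  field_simp
  ring

end flow2

/-- At a local max, if the derivative of the derivative exists, it is ≤ 0. -/
theorem second_deriv_nonpos_at_localmax {g : ℝ → ℝ} {x c : ℝ} (hmax : IsLocalMax g x)
    (hg : ∀ᶠ y in 𝓝 x, DifferentiableAt ℝ g y) (hg' : HasDerivAt (deriv g) c x) : c ≤ 0 := by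
  by_contra hc
  push_neg at hc
  have hd0 : deriv g x = 0 := hmax.deriv_eq_zero
  have hslope := hasDerivAt_iff_tendsto_slope.1 hg'
  have hev : ∀ᶠ y in 𝓝[≠] x, 0 < slope (deriv g) x y :=
    hslope.eventually (eventually_gt_nhds hc)
  have hev' : ∀ᶠ y in 𝓝[>] x, 0 < deriv g y := by
    have hsub : Ioi x ⊆ {x}ᶜ := fun y (hy : y ∈ Ioi x) => by
      simp only [Set.mem_compl_iff, Set.mem_singleton_iff]
      exact ne_of_gt hy
    filter_upwards [nhdsWithin_mono x hsub hev, self_mem_nhdsWithin] with y h1 (h2 : x < y)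
    have := mul_pos h1 (sub_pos.2 h2)
    rw [slope_def_field, div_mul_cancel₀] at this
    · rw [hd0, sub_zero] at this; exact this
    · exact (sub_pos.2 h2).ne'
  have hevd : ∀ᶠ y in 𝓝[>] x, DifferentiableAt ℝ g y := nhdsWithin_le_nhds hg
  have hloc : ∀ᶠ y in 𝓝[>] x, g y ≤ g x := nhdsWithin_le_nhds hmax
  obtain ⟨b, hb, hball⟩ := (nhdsGT_basis x).eventually_iff.1
    ((hev'.and hevd).and hloc)
  set y := (x + b) / 2 with hy
  have hxy : x < y := by simp only [hy]; linarith
  have hyb : y < b := by simp only [hy]; linarith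
  have hmono : StrictMonoOn g (Icc x y) := by
    apply strictMonoOn_of_deriv_pos (convex_Icc x y)
    · intro z hz
      rcases eq_or_lt_of_le hz.1 with rfl | hlt
      · exact (hg.self_of_nhds).continuousAt.continuousWithinAt
      · exact ((hball ⟨hlt, lt_of_le_of_lt hz.2 hyb⟩).1.2).continuousAt.continuousWithinAt
    · intro z hz
      rw [interior_Icc] at hz
      exact (hball ⟨hz.1, lt_trans hz.2 hyb⟩).1.1
  have h1 : g x < g y := hmono ⟨le_refl x, hxy.le⟩ ⟨hxy.le, le_refl y⟩ hxy
  have h2 : g y ≤ g x := (hball ⟨hxy, hyb⟩).2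
  linarith

/-- If `g y ≤ g x` on the left of `x` and `g` differentiable at `x`, then `g' x ≥ 0`. -/
theorem deriv_nonneg_of_left_le {g : ℝ → ℝ} {x d : ℝ} (hg : HasDerivAt g d x)
    (hle : ∀ᶠ y in 𝓝[<] x, g y ≤ g x) : 0 ≤ d := by
  have hslope := (hasDerivAt_iff_tendsto_slope.1 hg).mono_left
    (nhdsWithin_mono x (fun y (hy : y ∈ Iio x) => by
      simp only [Set.mem_compl_iff, Set.mem_singleton_iff]
      exact ne_of_lt hy))
  refine ge_of_tendsto hslope ?_
  filter_upwards [hle, self_mem_nhdsWithin] with y h1 (h2 : y < x)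
  rw [slope_def_field]
  have hnum : g y - g x ≤ 0 := by linarith
  have hden : y - x < 0 := by linarith
  rw [div_nonneg_iff]
  exact Or.inr ⟨hnum, hden.le⟩


section periodic
variable {Γ : ℝ × ℝ → E} {q : ℝ × ℝ} {c : ℝ × ℝ}

theorem fderiv_periodic {f : ℝ × ℝ → E} (hf : DifferentiableAt ℝ f (q + c))
    (hper : ∀ r, f (r + c) = f r) : fderiv ℝ f (q + c) = fderiv ℝ f q := by
  have h := hf.hasFDerivAt.comp q ((hasFDerivAt_id q).add_const c)
  have heq : (f ∘ fun x : ℝ × ℝ => id x + c) = f := by funext r; exact hper r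
  rw [heq, ContinuousLinearMap.comp_id] at h
  exact h.fderiv.symm

variable (hΓ : ContDiff ℝ ∞ Γ) (hper : ∀ r, Γ (r + c) = Γ r)
include hΓ hper

theorem pd1Γ_periodic : ∀ r, pd1 Γ (r + c) = pd1 Γ r := by
  intro r
  show fderiv ℝ Γ (r + c) (1, 0) = fderiv ℝ Γ r (1, 0)
  rw [fderiv_periodic (diffΓ hΓ) hper]

theorem TT_periodic : ∀ r, TT Γ (r + c) = TT Γ r := by
  intro r; rw [TT, TT, VV, VV, pd1Γ_periodic hΓ hper]

theorem FF_periodic (hq : pd1 Γ q ≠ 0) : FF Γ (q + c) = FF Γ q := by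
  have hq' : pd1 Γ (q + c) ≠ 0 := by rw [pd1Γ_periodic hΓ hper]; exact hq
  have hpdTT : pd1 (TT Γ) (q + c) = pd1 (TT Γ) q := by
    show fderiv ℝ (TT Γ) (q + c) (1, 0) = fderiv ℝ (TT Γ) q (1, 0)
    rw [fderiv_periodic (diffTT hΓ hq') (TT_periodic hΓ hper)]
  rw [FF, FF, HH, HH, VV, VV, pd1Γ_periodic hΓ hper, hpdTT]

end periodic

section mainbound
variable {Γ : ℝ × ℝ → E}

theorem FF_bound (hΓ : ContDiff ℝ ∞ Γ) {om K0 : ℝ}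
    (hper : ∀ r : ℝ × ℝ, Γ (r + ((2 * π : ℝ), (0 : ℝ))) = Γ r)
    (hW : ∀ r : ℝ × ℝ, r.2 ∈ Ico (0:ℝ) om → pd1 Γ r ≠ 0)
    (hflow : ∀ r : ℝ × ℝ, r.2 ∈ Ico (0:ℝ) om → pd2 Γ r = HH Γ r)
    (hinit : ∀ p : ℝ, FF Γ (p, 0) ≤ K0)
    (hK0pos : 0 < K0) :
    ∀ p t1, 0 < t1 → t1 ≤ 1 / (8 * K0) → t1 < om →
      FF Γ (p, t1) ≤ K0 / (1 - 4 * K0 * t1) := by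
  have hFFcont : ∀ r : ℝ × ℝ, pd1 Γ r ≠ 0 → ContinuousAt (FF Γ) r := fun r hr =>
    (FF_contDiffAt hΓ hr).continuousAt
  have hFFper : ∀ t, t ∈ Ico (0:ℝ) om → Function.Periodic (fun p => FF Γ (p, t)) (2 * π) := by
    intro t ht p
    have h := FF_periodic (q := (p, t)) (c := ((2 * π : ℝ), (0 : ℝ))) hΓ hper (hW _ ht)
    simpa using h
  intro p1 t1 ht1pos ht1le ht1om
  have h8K : (0:ℝ) < 8 * K0 := by linarith
  have h4Kt1 : 4 * K0 * t1 ≤ 1 / 2 := by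
    rw [le_div_iff₀ h8K] at ht1le
    nlinarith
  -- main claim for each ε
  have key : ∀ ε : ℝ, 0 < ε → ε < K0 / 2 →
      FF Γ (p1, t1) ≤ (K0 + ε) * (1 - 4 * (K0 + 2 * ε) * t1)⁻¹ := by
    intro ε hε hεK
    set a := K0 + ε with ha
    set b := K0 + 2 * ε with hb
    have hapos : 0 < a := by simp only [ha]; linarith
    have hbpos : 0 < b := by simp only [hb]; linarith
    have hab : a < b := by simp only [ha, hb]; linarith
    have ht14b : 4 * b * t1 < 1 := by
      have : b < 2 * K0 := by simp only [hb]; linarith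
      nlinarith
    have hden : ∀ t ∈ Icc (0:ℝ) t1, 0 < 1 - 4 * b * t := by
      intro t ht
      nlinarith [ht.1, ht.2]
    set ψ : ℝ → ℝ := fun t => a * (1 - 4 * b * t)⁻¹ with hψdef
    by_contra hcon
    push_neg at hcon
    -- reduce p1 to the period interval
    obtain ⟨p1', hp1'mem, hp1'eq⟩ :=
      (hFFper t1 ⟨ht1pos.le, ht1om⟩).exists_mem_Ico₀ Real.two_pi_pos p1
    set rect : Set (ℝ × ℝ) := Icc (0:ℝ) (2 * π) ×ˢ Icc (0:ℝ) t1 with hrect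
    have hrectW : ∀ r ∈ rect, pd1 Γ r ≠ 0 := fun r hr =>
      hW r ⟨hr.2.1, lt_of_le_of_lt hr.2.2 ht1om⟩
    have hpd1cont : Continuous (pd1 Γ) :=
      ((hΓ.fderiv_right (m := ∞) (by decide)).clm_apply contDiff_const).continuous
    set UU : Set (ℝ × ℝ) := {r | pd1 Γ r ≠ 0} ∩ {r | r.2 < 1 / (4 * b)} with hUU
    have hUUopen : IsOpen UU :=
      (isOpen_compl_singleton.preimage hpd1cont).inter (isOpen_Iio.preimage continuous_snd)
    have hUUden : ∀ r ∈ UU, 1 - 4 * b * r.2 ≠ 0 := by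
      intro r hr
      have h2 : r.2 < 1 / (4 * b) := hr.2
      have : 4 * b * r.2 < 1 := by
        rw [lt_div_iff₀ (by linarith : (0:ℝ) < 4 * b)] at h2
        linarith [h2]
      linarith
    have hGcont : ContinuousOn (fun r : ℝ × ℝ => FF Γ r - ψ r.2) UU := by
      intro r hr
      apply ContinuousAt.continuousWithinAt
      apply (hFFcont r hr.1).sub
      apply ContinuousAt.mul continuousAt_const
      exact (ContinuousAt.inv₀ (by fun_prop) (hUUden r hr))
    set O : Set (ℝ × ℝ) := UU ∩ (fun r : ℝ × ℝ => FF Γ r - ψ r.2) ⁻¹' (Iio 0) with hO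
    have hOopen : IsOpen O := hGcont.isOpen_inter_preimage hUUopen isOpen_Iio
    have hrectUU : rect ⊆ UU := by
      intro r hr
      refine ⟨hrectW r hr, ?_⟩
      have : r.2 ≤ t1 := hr.2.2
      have ht1b : t1 < 1 / (4 * b) := by
        rw [lt_div_iff₀ (by linarith : (0:ℝ) < 4 * b)]
        linarith
      exact lt_of_le_of_lt this ht1b
    set A : Set (ℝ × ℝ) := rect \ O with hA
    have hA_iff : ∀ r ∈ rect, (r ∈ A ↔ ψ r.2 ≤ FF Γ r) := by
      intro r hr
      simp only [hA, Set.mem_diff, hO, Set.mem_inter_iff, Set.mem_preimage, Set.mem_Iio]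
      constructor
      · rintro ⟨-, hno⟩
        by_contra hlt
        push_neg at hlt
        exact hno ⟨hrectUU hr, by linarith⟩
      · intro hle
        exact ⟨hr, fun hcon => by linarith [hcon.2]⟩
    have hrectcomp : IsCompact rect := isCompact_Icc.prod isCompact_Icc
    have hAcomp : IsCompact A :=
      hrectcomp.of_isClosed_subset ((isClosed_Icc.prod isClosed_Icc).sdiff hOopen)
        diff_subset
    have hAne : A.Nonempty := by
      refine ⟨(p1', t1), ?_⟩
      have hmem : (p1', t1) ∈ rect :=
        ⟨Ico_subset_Icc_self hp1'mem, ⟨ht1pos.le, le_refl t1⟩⟩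
      rw [hA_iff _ hmem]
      show ψ t1 ≤ FF Γ (p1', t1)
      rw [← hp1'eq]
      exact le_of_lt hcon
    set tproj := Prod.snd '' A with htproj
    have htcomp : IsCompact tproj := hAcomp.image continuous_snd
    set tstar := sInf tproj with htstar
    have htmem : tstar ∈ tproj := htcomp.sInf_mem (hAne.image _)
    obtain ⟨q0, hq0A, hq0t⟩ := htmem
    have hq0rect : q0 ∈ rect := hq0A.1
    have htstar01 : tstar ∈ Icc (0:ℝ) t1 := by rw [← hq0t]; exact hq0rect.2
    have hψq0 : ψ q0.2 ≤ FF Γ q0 := (hA_iff q0 hq0rect).1 hq0A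
    have htstar_pos : 0 < tstar := by
      rcases lt_or_eq_of_le htstar01.1 with h | h
      · exact h
      · exfalso
        have hq02 : q0.2 = 0 := by rw [hq0t, ← h]
        have hq0eq : q0 = (q0.1, (0:ℝ)) := by
          rw [← hq02]
        have hinit0 : FF Γ q0 ≤ K0 := by
          rw [hq0eq]; exact hinit q0.1
        have : ψ q0.2 = a := by rw [hq02]; simp [hψdef]
        rw [this] at hψq0
        simp only [ha] at hψq0
        linarith
    have htstarom : tstar < om := lt_of_le_of_lt htstar01.2 ht1om
    have hbefore : ∀ r ∈ rect, r.2 < tstar → FF Γ r < ψ r.2 := by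
      intro r hr hlt
      by_contra hge
      push_neg at hge
      have hrA : r ∈ A := (hA_iff r hr).2 hge
      have : tstar ≤ r.2 := csInf_le htcomp.bddBelow ⟨r, hrA, rfl⟩
      linarith
    -- spatial maximizer at time tstar
    have hsliceW : ∀ p : ℝ, pd1 Γ (p, tstar) ≠ 0 := fun p =>
      hW _ ⟨htstar_pos.le, htstarom⟩
    have hcontslice : ContinuousOn (fun p => FF Γ (p, tstar)) (Icc 0 (2 * π)) := by
      intro p _
      apply ContinuousAt.continuousWithinAt
      have hemb : ContinuousAt (fun p : ℝ => (p, tstar)) p :=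
        continuousAt_id.prodMk continuousAt_const
      exact ContinuousAt.comp (x := p) (g := FF Γ) (hFFcont (p, tstar) (hsliceW p)) hemb
    obtain ⟨pstar, hpsmem, hpsmax⟩ := isCompact_Icc.exists_isMaxOn
      (⟨0, ⟨le_refl 0, by positivity⟩⟩ : (Icc (0:ℝ) (2 * π)).Nonempty) hcontslice
    have hglob : ∀ p, FF Γ (p, tstar) ≤ FF Γ (pstar, tstar) := by
      intro p
      obtain ⟨y, hy, hyeq⟩ :=
        (hFFper tstar ⟨htstar_pos.le, htstarom⟩).exists_mem_Ico₀ Real.two_pi_pos p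
      rw [hyeq]
      exact hpsmax (Ico_subset_Icc_self hy)
    have hqW : pd1 Γ (pstar, tstar) ≠ 0 := hsliceW pstar
    -- the touching identity
    have hψFq0 : ψ tstar ≤ FF Γ (pstar, tstar) := by
      have h1 : FF Γ q0 ≤ FF Γ (pstar, tstar) := by
        have : q0 = (q0.1, tstar) := by rw [← hq0t]
        rw [this]
        exact hglob q0.1
      calc ψ tstar = ψ q0.2 := by rw [hq0t]
        _ ≤ FF Γ q0 := hψq0
        _ ≤ _ := h1
    have hψcont : ContinuousAt ψ tstar := by
      apply ContinuousAt.mul continuousAt_const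
      apply ContinuousAt.inv₀ (by fun_prop)
      exact (hden tstar htstar01).ne'
    have hφcont : ContinuousAt (fun t => FF Γ (pstar, t) - ψ t) tstar := by
      apply ContinuousAt.sub _ hψcont
      have hemb : ContinuousAt (fun t : ℝ => (pstar, t)) tstar :=
        continuousAt_const.prodMk continuousAt_id
      exact ContinuousAt.comp (x := tstar) (g := FF Γ) (hFFcont (pstar, tstar) hqW) hemb
    have hevneg : ∀ᶠ t in 𝓝[<] tstar, FF Γ (pstar, t) - ψ t < 0 := by
      have hm : ∀ᶠ t in 𝓝[<] tstar, t ∈ Ioi (0:ℝ) :=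
        nhdsWithin_le_nhds (isOpen_Ioi.mem_nhds htstar_pos)
      filter_upwards [hm, self_mem_nhdsWithin] with t ht0 (htlt : t < tstar)
      have hrt : (pstar, t) ∈ rect :=
        ⟨hpsmem, ⟨le_of_lt ht0, le_trans htlt.le htstar01.2⟩⟩
      have := hbefore (pstar, t) hrt htlt
      simpa using sub_neg.2 this
    have htouch : FF Γ (pstar, tstar) = ψ tstar := by
      refine le_antisymm ?_ hψFq0
      have hle0 : FF Γ (pstar, tstar) - ψ tstar ≤ 0 := by
        refine le_of_tendsto (hφcont.tendsto.mono_left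
          (nhdsWithin_le_nhds : 𝓝[Iio tstar] tstar ≤ 𝓝 tstar)) ?_
        exact hevneg.mono fun t ht => le_of_lt ht
      linarith
    -- flow hypotheses hold near qstar
    have hWOq : ∀ᶠ r in 𝓝 (pstar, tstar), pd1 Γ r ≠ 0 ∧ pd2 Γ r = HH Γ r := by
      have h1 := eventually_W hΓ hqW
      have h2 : ∀ᶠ r : ℝ × ℝ in 𝓝 (pstar, tstar), r.2 ∈ Ioo (0:ℝ) om :=
        continuous_snd.continuousAt.preimage_mem_nhds
          (isOpen_Ioo.mem_nhds ⟨htstar_pos, htstarom⟩)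
      filter_upwards [h1, h2] with r hr1 hr2
      exact ⟨hr1, hflow r ⟨hr2.1.le, hr2.2⟩⟩
    -- spatial second derivative at the max
    set g : ℝ → ℝ := fun p => FF Γ (p, tstar) with hg
    have hloc : IsLocalMax g pstar := Filter.Eventually.of_forall hglob
    have hevW : ∀ᶠ p in 𝓝 pstar, pd1 Γ (p, tstar) ≠ 0 := by
      have hmap : Filter.Tendsto (fun p : ℝ => ((p, tstar) : ℝ × ℝ))
          (𝓝 pstar) (𝓝 (pstar, tstar)) :=
        continuousAt_id.prodMk continuousAt_const
      exact hmap.eventually (eventually_W hΓ hqW)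
    have hgdiffev : ∀ᶠ p in 𝓝 pstar, DifferentiableAt ℝ g p := by
      filter_upwards [hevW] with p hp
      have h1 : DifferentiableAt ℝ (fun p : ℝ => ((p, tstar) : ℝ × ℝ)) p :=
        differentiableAt_id.prodMk (differentiableAt_const _)
      exact DifferentiableAt.comp p (diffFF hΓ hp) h1
    have hderiv_eq : ∀ᶠ p in 𝓝 pstar, deriv g p = pd1 (FF Γ) (p, tstar) := by
      filter_upwards [hevW] with p hp
      exact (hasDerivAt_slice1 (q := ((p, tstar) : ℝ × ℝ)) (diffFF hΓ hp)).deriv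
    have hpd1FF0 : pd1 (FF Γ) (pstar, tstar) = 0 := by
      have h1 := hloc.deriv_eq_zero
      have h2 := hderiv_eq.self_of_nhds
      rw [h2] at h1; exact h1
    have hdiffpd1FF : DifferentiableAt ℝ (pd1 (FF Γ)) (pstar, tstar) :=
      (contDiffAt_pd1 (m := ∞) (FF_contDiffAt hΓ hqW) (by decide)).differentiableAt (by decide)
    have hu : HasDerivAt (fun p => pd1 (FF Γ) (p, tstar))
        (pd1 (pd1 (FF Γ)) (pstar, tstar)) pstar :=
      hasDerivAt_slice1 hdiffpd1FF
    have hdg : HasDerivAt (deriv g) (pd1 (pd1 (FF Γ)) (pstar, tstar)) pstar :=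
      hu.congr_of_eventuallyEq hderiv_eq
    have hcle : pd1 (pd1 (FF Γ)) (pstar, tstar) ≤ 0 :=
      second_deriv_nonpos_at_localmax hloc hgdiffev hdg
    have hvpos : 0 < VV Γ (pstar, tstar) := VV_pos hqW
    have hm1 : HasDerivAt (fun p => (fun r => (VV Γ r)⁻¹ * pd1 (FF Γ) r) (p, tstar))
        (pd1 (fun r => (VV Γ r)⁻¹ * pd1 (FF Γ) r) (pstar, tstar)) pstar :=
      hasDerivAt_slice1 ((diffVVinv hΓ hqW).mul hdiffpd1FF)
    have hm2 : HasDerivAt (fun p => (VV Γ (p, tstar))⁻¹ * pd1 (FF Γ) (p, tstar))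
        ((pd1 (fun r => (VV Γ r)⁻¹) (pstar, tstar)) * pd1 (FF Γ) (pstar, tstar)
          + (VV Γ (pstar, tstar))⁻¹ * pd1 (pd1 (FF Γ)) (pstar, tstar)) pstar :=
      (hasDerivAt_slice1 (diffVVinv hΓ hqW)).mul hu
    have hPle : pd1 (fun r => (VV Γ r)⁻¹ * pd1 (FF Γ) r) (pstar, tstar) ≤ 0 := by
      have heq := hm1.unique hm2
      rw [heq, hpd1FF0, mul_zero, zero_add]
      have hvinv : 0 ≤ (VV Γ (pstar, tstar))⁻¹ := le_of_lt (inv_pos.2 hvpos)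
      exact mul_nonpos_of_nonneg_of_nonpos hvinv hcle
    -- evolution inequality
    have hevol := pd2_FF_eq hΓ hWOq
    have hpd2le : pd2 (FF Γ) (pstar, tstar) ≤ 4 * (ψ tstar) ^ 2 := by
      rw [hevol, htouch]
      have hvinv : 0 ≤ (VV Γ (pstar, tstar))⁻¹ := le_of_lt (inv_pos.2 hvpos)
      have h1 : (VV Γ (pstar, tstar))⁻¹
          * pd1 (fun r => (VV Γ r)⁻¹ * pd1 (FF Γ) r) (pstar, tstar) ≤ 0 :=
        mul_nonpos_of_nonneg_of_nonpos hvinv hPle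
      have h2 : (0:ℝ) ≤ ‖DsH Γ (pstar, tstar)‖ ^ 2 := sq_nonneg _
      linarith
    -- time derivative from the left
    have hFt : HasDerivAt (fun t => FF Γ (pstar, t)) (pd2 (FF Γ) (pstar, tstar)) tstar :=
      hasDerivAt_slice2 (diffFF hΓ hqW)
    have hdenst : (0:ℝ) < 1 - 4 * b * tstar := hden tstar htstar01
    have hψd : HasDerivAt ψ (a * (4 * b / (1 - 4 * b * tstar) ^ 2)) tstar := by
      have h1 : HasDerivAt (fun t : ℝ => 1 - 4 * b * t) (-(4 * b)) tstar := by
        simpa using ((hasDerivAt_id tstar).const_mul (4 * b)).const_sub 1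
      have h2 := h1.inv hdenst.ne'
      have h3 := h2.const_mul a
      rw [neg_neg] at h3
      exact h3
    have hφd : HasDerivAt (fun t => FF Γ (pstar, t) - ψ t)
        (pd2 (FF Γ) (pstar, tstar) - a * (4 * b / (1 - 4 * b * tstar) ^ 2)) tstar :=
      hFt.sub hψd
    have hlef : ∀ᶠ t in 𝓝[<] tstar,
        (fun t => FF Γ (pstar, t) - ψ t) t ≤ (fun t => FF Γ (pstar, t) - ψ t) tstar := by
      filter_upwards [hevneg] with t ht
      show FF Γ (pstar, t) - ψ t ≤ FF Γ (pstar, tstar) - ψ tstar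
      rw [htouch]; linarith
    have h0le := deriv_nonneg_of_left_le hφd hlef
    -- numeric contradiction
    have hψval : ψ tstar = a * (1 - 4 * b * tstar)⁻¹ := rfl
    have hchain : a * (4 * b / (1 - 4 * b * tstar) ^ 2)
        ≤ 4 * (a * (1 - 4 * b * tstar)⁻¹) ^ 2 := by
      rw [← hψval]; linarith
    have hD2 : (0:ℝ) < (1 - 4 * b * tstar) ^ 2 := by positivity
    have hD2' : (0:ℝ) < ((1 - 4 * b * tstar) ^ 2)⁻¹ := inv_pos.2 hD2
    have hchain2 : (a * (4 * b)) * ((1 - 4 * b * tstar) ^ 2)⁻¹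
        ≤ (4 * a ^ 2) * ((1 - 4 * b * tstar) ^ 2)⁻¹ := by
      calc (a * (4 * b)) * ((1 - 4 * b * tstar) ^ 2)⁻¹
          = a * (4 * b / (1 - 4 * b * tstar) ^ 2) := by ring
        _ ≤ 4 * (a * (1 - 4 * b * tstar)⁻¹) ^ 2 := hchain
        _ = (4 * a ^ 2) * ((1 - 4 * b * tstar) ^ 2)⁻¹ := by
            rw [mul_pow, ← inv_pow]; ring
    have hchain3 : a * (4 * b) ≤ 4 * a ^ 2 := (mul_le_mul_iff_of_pos_right hD2').1 hchain2
    have h1 : 0 < a * b - a ^ 2 := by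
      have h := mul_pos hapos (sub_pos.2 hab)
      ring_nf at h ⊢
      linarith only [h]
    linarith only [h1, hchain3]
  -- pass to the limit ε → 0⁺
  have hdenpos : (0:ℝ) < 1 - 4 * K0 * t1 := by linarith
  have htends : Filter.Tendsto (fun ε : ℝ => (K0 + ε) * (1 - 4 * (K0 + 2 * ε) * t1)⁻¹)
      (𝓝[>] (0:ℝ)) (𝓝 (K0 / (1 - 4 * K0 * t1))) := by
    have hc : ContinuousAt (fun ε : ℝ => (K0 + ε) * (1 - 4 * (K0 + 2 * ε) * t1)⁻¹) 0 := by
      apply ContinuousAt.mul (by fun_prop)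
      apply ContinuousAt.inv₀ (by fun_prop)
      simpa using hdenpos.ne'
    have h0 : (fun ε : ℝ => (K0 + ε) * (1 - 4 * (K0 + 2 * ε) * t1)⁻¹) 0
        = K0 / (1 - 4 * K0 * t1) := by norm_num [div_eq_mul_inv]
    rw [← h0]
    exact hc.tendsto.mono_left nhdsWithin_le_nhds
  refine ge_of_tendsto htends ?_
  filter_upwards [Ioo_mem_nhdsGT_of_mem
    (⟨le_refl (0:ℝ), half_pos hK0pos⟩ : (0:ℝ) ∈ Ico (0:ℝ) (K0 / 2))] with ε hε
  exact key ε hε.1 hε.2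

end mainbound

end CSFAux

/-- doubling-time estimate for the curvature:
for `t ∈ (0, 1/(8K₀)]` one has `κ² ≤ K₀/(1-4K₀t) ≤ 2K₀`. -/
theorem curvature_doubling_estimate (n : ℕ) (ω : ℝ) (hω : 0 < ω)
    (γ N : ℝ → ℝ → EuclideanSpace ℝ (Fin n)) (κ v : ℝ → ℝ → ℝ) (K0 : ℝ)
    (hsmooth : ContDiff ℝ (⊤ : ℕ∞) (fun q : ℝ × ℝ => γ q.1 q.2))
    (hper : ∀ p t, γ (p + 2 * π) t = γ p t)
    (hv : ∀ p t, v p t = ‖deriv (fun q => γ q t) p‖)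
    (himm : ∀ p t, t ∈ Set.Ico 0 ω → v p t ≠ 0)
    (hκ : ∀ p t, t ∈ Set.Ico 0 ω → κ p t = ‖dS v (dS v γ) p t‖)
    (hflow : ∀ p t, t ∈ Set.Ico 0 ω → dT γ p t = dS v (dS v γ) p t)
    (hbdd : BddAbove (Set.range fun p => (κ p 0) ^ 2))
    (hK0 : K0 = ⨆ p : ℝ, (κ p 0) ^ 2) :
    ∀ p t, t ∈ Set.Ioc 0 (1 / (8 * K0)) → t < ω →
      (κ p t) ^ 2 ≤ K0 / (1 - 4 * K0 * t) ∧
      K0 / (1 - 4 * K0 * t) ≤ 2 * K0 := by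
  intro p t ht htω
  have hK8 : 0 < 8 * K0 := by
    by_contra h
    push_neg at h
    have h1 : 1 / (8 * K0) ≤ 0 := by
      rcases lt_or_eq_of_le h with h' | h'
      · exact le_of_lt (div_neg_of_pos_of_neg one_pos h')
      · rw [h']; norm_num
    linarith [ht.1, ht.2]
  have hK0pos : 0 < K0 := by linarith
  set Γ : ℝ × ℝ → EuclideanSpace ℝ (Fin n) := fun q => γ q.1 q.2 with hΓdef
  have hΓ : ContDiff ℝ ((⊤ : ℕ∞) : WithTop ℕ∞) Γ := hsmooth.of_le (by simp)
  have hd1 : ∀ (p' t' : ℝ), deriv (fun q => γ q t') p' = pd1 Γ (p', t') := by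
    intro p' t'
    exact (hasDerivAt_slice1 (q := ((p', t') : ℝ × ℝ)) (diffΓ hΓ)).deriv
  have hvV : ∀ (p' t' : ℝ), v p' t' = VV Γ (p', t') := by
    intro p' t'; rw [hv, hd1]; rfl
  have hWd : ∀ r : ℝ × ℝ, r.2 ∈ Set.Ico 0 ω → pd1 Γ r ≠ 0 := by
    intro r hr h0
    have hvne := himm r.1 r.2 hr
    rw [hvV r.1 r.2] at hvne
    apply hvne
    show ‖pd1 Γ (r.1, r.2)‖ = 0
    rw [show pd1 Γ (r.1, r.2) = pd1 Γ r from rfl, h0, norm_zero]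
  have hTd : ∀ (p' t' : ℝ), dS v γ p' t' = TT Γ (p', t') := by
    intro p' t'
    show (v p' t')⁻¹ • deriv (fun q => γ q t') p' = TT Γ (p', t')
    rw [hvV, hd1]; rfl
  have hHd : ∀ (p' t' : ℝ), t' ∈ Set.Ico 0 ω → dS v (dS v γ) p' t' = HH Γ (p', t') := by
    intro p' t' ht'
    have hq : pd1 Γ (p', t') ≠ 0 := hWd (p', t') ht'
    have hfun : (fun q => dS v γ q t') = fun q => TT Γ (q, t') := by
      funext q; exact hTd q t'
    show (v p' t')⁻¹ • deriv (fun q => dS v γ q t') p' = HH Γ (p', t')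
    rw [hfun, hvV]
    have hder : deriv (fun q => TT Γ (q, t')) p' = pd1 (TT Γ) (p', t') :=
      (hasDerivAt_slice1 (q := ((p', t') : ℝ × ℝ)) (diffTT hΓ hq)).deriv
    rw [hder]; rfl
  have hflow' : ∀ r : ℝ × ℝ, r.2 ∈ Set.Ico 0 ω → pd2 Γ r = HH Γ r := by
    intro r hr
    have h1 : dT γ r.1 r.2 = pd2 Γ r := by
      show deriv (fun τ => γ r.1 τ) r.2 = pd2 Γ r
      exact (hasDerivAt_slice2 (q := r) (diffΓ hΓ)).deriv
    have h2 := hflow r.1 r.2 hr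
    rw [h1, hHd r.1 r.2 hr] at h2
    exact h2
  have hper' : ∀ r : ℝ × ℝ, Γ (r + ((2 * π : ℝ), (0 : ℝ))) = Γ r := by
    intro r
    show γ (r.1 + 2 * π) (r.2 + 0) = γ r.1 r.2
    rw [add_zero]
    exact hper r.1 r.2
  have hκκ : ∀ (p' t' : ℝ), t' ∈ Set.Ico 0 ω → (κ p' t') ^ 2 = FF Γ (p', t') := by
    intro p' t' ht'
    rw [hκ p' t' ht', hHd p' t' ht']
    rfl
  have h0ω : (0 : ℝ) ∈ Set.Ico 0 ω := ⟨le_refl 0, hω⟩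
  have hinit : ∀ p' : ℝ, FF Γ (p', 0) ≤ K0 :=
    fun p' =>
    calc FF Γ (p', 0) = (κ p' 0) ^ 2 := (hκκ p' 0 h0ω).symm
      _ ≤ ⨆ p'' : ℝ, (κ p'' 0) ^ 2 := le_ciSup hbdd p'
      _ = K0 := hK0.symm
  have hmain := FF_bound hΓ hper' hWd hflow' hinit hK0pos p t ht.1 ht.2 htω
  have h4 : 4 * K0 * t ≤ 1 / 2 := by
    have h2 := ht.2
    rw [le_div_iff₀ hK8] at h2
    nlinarith
  constructor
  · rw [hκκ p t ⟨ht.1.le, htω⟩]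
    exact hmain
  · have hdpos : (0 : ℝ) < 1 - 4 * K0 * t := by linarith
    have hhalf : (1 : ℝ) / 2 ≤ 1 - 4 * K0 * t := by linarith
    calc K0 / (1 - 4 * K0 * t) ≤ K0 / (1 / 2) :=
          div_le_div_of_nonneg_left hK0pos.le (by norm_num) hhalf
      _ = 2 * K0 := by ring
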